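/- Every relatively separated subset of ℂ is a finite union of uniformly separated subsets. -/

import Mathlib

open Metric

/-- `Λ` is relatively separated: disks of radius 1 contain a uniformly bounded
number of points of `Λ`. -/
def RelativelySeparated (Λ : Set ℂ) : Prop :=
  ∃ N : ℕ, ∀ z : ℂ, (Λ ∩ Metric.ball z 1).Finite ∧ (Λ ∩ Metric.ball z 1).ncard ≤ N

/-- `Λ` is uniformly separated: distinct points are at distance at least `ρ > 0`. -/
def UniformlySeparated (Λ : Set ℂ) : Prop :=
  ∃ ρ : ℝ, 0 < ρ ∧ ∀ x ∈ Λ, ∀ y ∈ Λ, x ≠ y → ρ ≤ dist x y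

/-!
Cut the plane into half-open squares of side `1/2`. A square lies in a disk of radius 1, so it
contains at most `N` points of `Λ`, which we number injectively by `Fin (N + 1)`. Colour each
point by this number together with the parities of the two integer coordinates of its square.
Two distinct points of the same colour lie in distinct squares whose coordinates differ by an
even amount in each direction, hence in squares at distance at least `1/2` from each other.
-/

open Set

theorem one_lt_abs_sub_of_floor_ne_of_floor_modEq {R : Type*} [CommRing R] [LinearOrder R]
    [IsStrictOrderedRing R] [FloorRing R] {a b : R} (hne : ⌊a⌋ ≠ ⌊b⌋)
    (hmod : ⌊a⌋ ≡ ⌊b⌋ [ZMOD 2]) : 1 < |a - b| := by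
  have hgap : ⌊a⌋ + 2 ≤ ⌊b⌋ ∨ ⌊b⌋ + 2 ≤ ⌊a⌋ := by
    rw [Int.ModEq] at hmod
    omega
  rw [lt_abs]
  rcases hgap with h | h
  · have : (⌊a⌋ : R) + 2 ≤ ⌊b⌋ := mod_cast h
    right
    linarith [Int.lt_floor_add_one a, Int.floor_le b]
  · have : (⌊b⌋ : R) + 2 ≤ ⌊a⌋ := mod_cast h
    left
    linarith [Int.lt_floor_add_one b, Int.floor_le a]

theorem exists_forall_injOn_inter_preimage_singleton {X ι β : Type*} [Finite β] [Nonempty β]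
    (f : X → ι) {s : Set X} (h : ∀ p, (s ∩ f ⁻¹' {p}).encard ≤ ENat.card β) :
    ∃ g : X → β, ∀ p, InjOn g (s ∩ f ⁻¹' {p}) := by
  have hg : ∀ p, ∃ g : X → β, InjOn g (s ∩ f ⁻¹' {p}) := fun p => by
    have hfin : (s ∩ f ⁻¹' {p}).Finite :=
      finite_of_encard_le_coe ((h p).trans_eq (ENat.card_eq_coe_natCard β))
    obtain ⟨g, -, hg⟩ := hfin.exists_injOn_of_encard_le (t := (univ : Set β))
      (by rw [encard_univ]; exact h p)
    exact ⟨g, hg⟩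
  choose g hg using hg
  refine ⟨fun x => g (f x) x, fun p x hx y hy hxy => hg p hx hy ?_⟩
  have hxp : f x = p := hx.2
  have hyp : f y = p := hy.2
  simpa only [hxp, hyp] using hxy

theorem encard_inter_preimage_singleton_le {X ι : Type*} [PseudoMetricSpace X] {f : X → ι}
    {r : ℝ} (hf : ∀ x y, f x = f y → dist x y < r) {s : Set X} {N : ℕ∞}
    (hs : ∀ z, (s ∩ ball z r).encard ≤ N) (p : ι) : (s ∩ f ⁻¹' {p}).encard ≤ N := by
  rcases (s ∩ f ⁻¹' {p}).eq_empty_or_nonempty with hempty | ⟨x, hx⟩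
  · simp [hempty]
  refine (encard_le_encard (t := s ∩ ball x r) fun y hy => ⟨hy.1, ?_⟩).trans (hs x)
  exact mem_ball.2 (hf y x (hy.2.trans hx.2.symm))

theorem exists_fin_iUnion_eq_of_forall_inter_preimage_singleton {X C : Type*} [Finite C]
    (P : Set X → Prop) (s : Set X) (f : X → C) (hP : ∀ c, P (s ∩ f ⁻¹' {c})) :
    ∃ (n : ℕ) (B : Fin n → Set X), s = ⋃ i, B i ∧ ∀ i, P (B i) := by
  obtain ⟨n, ⟨e⟩⟩ := Finite.exists_equiv_fin C
  refine ⟨n, fun i => s ∩ f ⁻¹' {e.symm i}, ?_, fun i => hP _⟩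
  rw [e.symm.surjective.iUnion_comp (fun c => s ∩ f ⁻¹' {c}), ← inter_iUnion,
    ← preimage_iUnion, iUnion_of_singleton, preimage_univ, inter_univ]

theorem relativelySeparated_iff_encard_le {Λ : Set ℂ} :
    RelativelySeparated Λ ↔ ∃ N : ℕ, ∀ z, (Λ ∩ ball z 1).encard ≤ N := by
  simp only [RelativelySeparated, encard_le_coe_iff_finite_ncard_le]

/-- The square `[p/2, (p+1)/2) × [q/2, (q+1)/2)` containing `z` is labelled `(p, q)`. -/
noncomputable def halfCell (z : ℂ) : ℤ × ℤ := (⌊2 * z.re⌋, ⌊2 * z.im⌋)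

noncomputable def halfCellParity (z : ℂ) : ZMod 2 × ZMod 2 := ((halfCell z).1, (halfCell z).2)

theorem dist_lt_one_of_halfCell_eq {x y : ℂ} (h : halfCell x = halfCell y) : dist x y < 1 := by
  have hre := Int.abs_sub_lt_one_of_floor_eq_floor (congrArg Prod.fst h)
  have him := Int.abs_sub_lt_one_of_floor_eq_floor (congrArg Prod.snd h)
  rw [← mul_sub, abs_mul, abs_two] at hre him
  rw [Complex.dist_eq]
  calc ‖x - y‖ ≤ |(x - y).re| + |(x - y).im| := Complex.norm_le_abs_re_add_abs_im _
    _ = |x.re - y.re| + |x.im - y.im| := by rw [Complex.sub_re, Complex.sub_im]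
    _ < 1 := by linarith

theorem half_lt_dist_of_halfCell_ne {x y : ℂ} (hne : halfCell x ≠ halfCell y)
    (hpar : halfCellParity x = halfCellParity y) : 1 / 2 < dist x y := by
  have hmod_re := (ZMod.intCast_eq_intCast_iff _ _ 2).1 (congrArg Prod.fst hpar)
  have hmod_im := (ZMod.intCast_eq_intCast_iff _ _ 2).1 (congrArg Prod.snd hpar)
  have hcoord : 1 < |2 * x.re - 2 * y.re| ∨ 1 < |2 * x.im - 2 * y.im| := by
    by_cases hre : (halfCell x).1 = (halfCell y).1
    · exact .inr (one_lt_abs_sub_of_floor_ne_of_floor_modEq (fun him => hne (Prod.ext hre him))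
        hmod_im)
    · exact .inl (one_lt_abs_sub_of_floor_ne_of_floor_modEq hre hmod_re)
  simp only [← mul_sub, abs_mul, abs_two] at hcoord
  rw [Complex.dist_eq]
  rcases hcoord with hcoord | hcoord
  · calc (1 : ℝ) / 2 < |x.re - y.re| := by linarith
      _ = |(x - y).re| := by rw [Complex.sub_re]
      _ ≤ ‖x - y‖ := Complex.abs_re_le_norm _
  · calc (1 : ℝ) / 2 < |x.im - y.im| := by linarith
      _ = |(x - y).im| := by rw [Complex.sub_im]
      _ ≤ ‖x - y‖ := Complex.abs_im_le_norm _

theorem uniformlySeparated_inter_preimage_halfCellParity {Λ : Set ℂ} {β : Type*}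
    {g : ℂ → β} (hg : ∀ p, InjOn g (Λ ∩ halfCell ⁻¹' {p}))
    (c : (ZMod 2 × ZMod 2) × β) :
    UniformlySeparated (Λ ∩ (fun z => (halfCellParity z, g z)) ⁻¹' {c}) := by
  refine ⟨1 / 2, one_half_pos, fun x hx y hy hxy => ?_⟩
  have hcol : (halfCellParity x, g x) = (halfCellParity y, g y) := hx.2.trans hy.2.symm
  by_cases hcell : halfCell x = halfCell y
  · exact absurd (hg _ ⟨hx.1, rfl⟩ ⟨hy.1, hcell.symm⟩ (congrArg Prod.snd hcol)) hxy
  · exact (half_lt_dist_of_halfCell_ne hcell (congrArg Prod.fst hcol)).le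

/-- Every relatively separated subset of `ℂ` is a finite union of uniformly
separated subsets. -/
theorem relativelySeparated_iUnion_uniformlySeparated
    (Λ : Set ℂ) (hΛ : RelativelySeparated Λ) :
    ∃ (n : ℕ) (Λs : Fin n → Set ℂ),
      Λ = ⋃ i, Λs i ∧ ∀ i, UniformlySeparated (Λs i) := by
  obtain ⟨N, hN⟩ := relativelySeparated_iff_encard_le.1 hΛ
  have hcell (p : ℤ × ℤ) : (Λ ∩ halfCell ⁻¹' {p}).encard ≤ ENat.card (Fin (N + 1)) :=
    (encard_inter_preimage_singleton_le (fun _ _ => dist_lt_one_of_halfCell_eq) hN p).trans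
      (by simp)
  obtain ⟨g, hg⟩ := exists_forall_injOn_inter_preimage_singleton halfCell hcell
  exact exists_fin_iUnion_eq_of_forall_inter_preimage_singleton UniformlySeparated Λ _
    (uniformlySeparated_inter_preimage_halfCellParity hg)
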